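/- arXiv:2307.04411 — 12 statements merged into one kernel-verified Lean document; each statement's English description precedes it below -/
import Mathlib

section
/- Consider allocating (n−1)/2 identical items, each of cost 1 to every agent, among n agents (n odd, n ≥ 2). For any partition X of the items into n bundles, the total subsidy ∑_i max{c(X_i) − (n−1)/(2n), 0} is at least (n²−1)/(4n). -/
open Finset

/-!
Each agent's subsidy dominates a fixed fraction of her bundle: with `p = (n-1)/(2n)`,
`max (k - p) 0 ≥ k (1 - p)` for every integer `k ≥ 0`. Summing over the agents, the total subsidy
is at least `(1 - p)` times the number of items, i.e. `(n-1)/2 · (n+1)/(2n) = (n²-1)/(4n)`.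
-/

lemma nat_mul_one_sub_le_max_sub_zero (k : ℕ) {p : ℝ} (hp : 0 ≤ p) :
    k * (1 - p) ≤ max (k - p) 0 := by
  rcases Nat.eq_zero_or_pos k with rfl | hk
  · simp
  · have hk1 : (1 : ℝ) ≤ k := by exact_mod_cast hk
    exact le_max_of_le_left (by nlinarith)

lemma card_mul_one_sub_le_sum_max_card_fiber_sub {α ι : Type*} [Fintype α] [Fintype ι]
    [DecidableEq ι] (X : α → ι) {p : ℝ} (hp : 0 ≤ p) :
    Fintype.card α * (1 - p) ≤ ∑ i, max (((univ.filter fun e => X e = i).card : ℝ) - p) 0 := by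
  have hcard : Fintype.card α = ∑ i, (univ.filter fun e => X e = i).card :=
    card_eq_sum_card_fiberwise fun _ _ => mem_univ _
  rw [hcard, Nat.cast_sum, sum_mul]
  exact sum_le_sum fun i _ => nat_mul_one_sub_le_max_sub_zero _ hp

theorem prop_chores_lower_bound_odd_general (n : ℕ) (hodd : Odd n)
    (X : Fin ((n - 1) / 2) → Fin n) :
    ((n : ℝ) ^ 2 - 1) / (4 * n) ≤
      ∑ i : Fin n,
        max (((Finset.univ.filter fun e => X e = i).card : ℝ) - ((n : ℝ) - 1) / (2 * n)) 0 := by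
  obtain ⟨t, rfl⟩ := hodd
  have hp : (0 : ℝ) ≤ ((2 * t + 1 : ℕ) - 1) / (2 * (2 * t + 1 : ℕ)) := by
    push_cast; rw [add_sub_cancel_right]; positivity
  refine le_trans (le_of_eq ?_) (card_mul_one_sub_le_sum_max_card_fiber_sub X hp)
  rw [Fintype.card_fin, show (2 * t + 1 - 1) / 2 = t by omega]
  push_cast
  field_simp
  ring

/-- Allocating `(n-1)/2` identical unit-cost items among `n` agents (`n` odd, `n ≥ 2`):
for any allocation `X`, the total subsidy `∑ i, max (c(X_i) - (n-1)/(2n)) 0` needed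
for proportionality is at least `(n² - 1)/(4n)`. -/
theorem prop_chores_lower_bound_odd (n : ℕ) (hn : 2 ≤ n) (hodd : Odd n)
    (X : Fin ((n - 1) / 2) → Fin n) :
    ((n : ℝ) ^ 2 - 1) / (4 * n) ≤
      ∑ i : Fin n,
        max (((Finset.univ.filter fun e => X e = i).card : ℝ) - ((n : ℝ) - 1) / (2 * n)) 0 :=
  prop_chores_lower_bound_odd_general n hodd X
end

section
/- The Load Balancing Algorithm, which processes items in order of non-increasing cost and assigns each item to an agent currently holding a bundle of minimum cost, outputs a PROPX allocation: for every agent i and every item e in the final bundle X_i, c(X_i − e) ≤ c(M)/n. -/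
open Finset

/-!
Let `j` be the last item that agent `i` receives. Since items arrive in non-increasing order of
cost, removing any item `e ∈ X_i` leaves at most the cost of `X_i - j`, which is the bundle `i`
held when `j` was allocated. At that moment this bundle was the cheapest one, so `n` copies of
it cost at most the items allocated so far, hence at most `c(M)`.
-/

theorem Finset.sum_erase_le_sum_erase {ι M : Type*} [DecidableEq ι] [AddCommGroup M]
    [PartialOrder M] [IsOrderedAddMonoid M] {s : Finset ι} {f : ι → M} {i j : ι}
    (hi : i ∈ s) (hj : j ∈ s) (h : f j ≤ f i) :
    ∑ x ∈ s.erase i, f x ≤ ∑ x ∈ s.erase j, f x := by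
  rw [sum_erase_eq_sub hi, sum_erase_eq_sub hj]
  exact sub_le_sub_left h _

theorem Finset.erase_max'_eq_filter_lt {α : Type*} [LinearOrder α] (s : Finset α)
    (hs : s.Nonempty) : s.erase (s.max' hs) = s.filter (· < s.max' hs) := by
  ext x
  simp only [mem_erase, mem_filter]
  constructor
  · rintro ⟨hne, hx⟩
    exact ⟨hx, lt_of_le_of_ne (s.le_max' x hx) hne⟩
  · rintro ⟨hx, hlt⟩
    exact ⟨hlt.ne, hx⟩

theorem Finset.card_nsmul_le_sum_of_le_sum_fiberwise {ι κ M : Type*} [Fintype κ] [DecidableEq κ]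
    [AddCommMonoid M] [PartialOrder M] [IsOrderedAddMonoid M] {s : Finset ι} {g : ι → κ}
    {f : ι → M} {b : M} (h : ∀ k, b ≤ ∑ x ∈ s with g x = k, f x) :
    Fintype.card κ • b ≤ ∑ x ∈ s, f x :=
  calc Fintype.card κ • b = ∑ _k : κ, b := by rw [sum_const, card_univ]
    _ ≤ ∑ k, ∑ x ∈ s with g x = k, f x := sum_le_sum fun k _ ↦ h k
    _ = ∑ x ∈ s, f x := sum_fiberwise s g f

theorem sum_bundle_before_le_proportionalShare {ι κ : Type*} [Fintype ι] [LinearOrder ι]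
    [Fintype κ] [DecidableEq κ] {c : ι → ℝ} (hc0 : ∀ e, 0 ≤ c e) (a : ι → κ) (j : ι)
    (hmin : ∀ k, ∑ e with e < j ∧ a e = a j, c e ≤ ∑ e with e < j ∧ a e = k, c e) :
    ∑ e with e < j ∧ a e = a j, c e ≤ (∑ e, c e) / Fintype.card κ := by
  have hcard : (0 : ℝ) < Fintype.card κ := by
    have : Nonempty κ := ⟨a j⟩
    exact_mod_cast Fintype.card_pos
  have hfiber :
      ∀ k, ∑ e with e < j ∧ a e = a j, c e ≤ ∑ e ∈ {e | e < j} with a e = k, c e := by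
    intro k
    rw [filter_filter]
    exact hmin k
  rw [le_div_iff₀' hcard, ← nsmul_eq_mul]
  calc Fintype.card κ • ∑ e with e < j ∧ a e = a j, c e ≤ ∑ e with e < j, c e :=
        card_nsmul_le_sum_of_le_sum_fiberwise hfiber
    _ ≤ ∑ e, c e := sum_le_sum_of_subset_of_nonneg (filter_subset _ _) fun e _ _ ↦ hc0 e

theorem loadBalancing_PROPX_general (n m : ℕ) (c : Fin m → ℝ)
    (hc0 : ∀ e, 0 ≤ c e)
    (hsort : ∀ j k : Fin m, j ≤ k → c k ≤ c j)
    (a : Fin m → Fin n)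
    (halg : ∀ (j : Fin m) (i : Fin n),
      ∑ e ∈ Finset.univ.filter (fun e => e < j ∧ a e = a j), c e ≤
        ∑ e ∈ Finset.univ.filter (fun e => e < j ∧ a e = i), c e) :
    ∀ (i : Fin n) (e : Fin m), a e = i →
      ∑ e' ∈ Finset.univ.filter (fun e' => a e' = i ∧ e' ≠ e), c e' ≤
        (∑ e', c e') / n := by
  rintro i e rfl
  set X : Finset (Fin m) := {e' | a e' = a e}
  have heX : e ∈ X := by simp [X]
  set j := X.max' ⟨e, heX⟩
  have hjX : j ∈ X := X.max'_mem _
  have haj : a j = a e := by simpa [X] using hjX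
  calc ∑ e' with a e' = a e ∧ e' ≠ e, c e' = ∑ e' ∈ X.erase e, c e' := by
        rw [← filter_filter, filter_ne']
    _ ≤ ∑ e' ∈ X.erase j, c e' := sum_erase_le_sum_erase heX hjX (hsort e j (X.le_max' e heX))
    _ = ∑ e' with e' < j ∧ a e' = a j, c e' := by
        rw [show X.erase j = X.filter (· < j) from erase_max'_eq_filter_lt X _, filter_filter,
          haj]
        simp_rw [and_comm]
    _ ≤ (∑ e', c e') / n := by
        simpa only [Fintype.card_fin] using sum_bundle_before_le_proportionalShare hc0 a j (halg j)

/-- The Load Balancing Algorithm outputs a PROPX allocation for identical agents.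
The run of the algorithm is described by the assignment `a : Fin m → Fin n`
(item `e` goes to agent `a e`): items have nonnegative costs sorted in
non-increasing order, and when item `j` is allocated, its receiver `a j` is an
agent whose current bundle (items `e < j` already assigned to her) has minimum
cost. Conclusion: for every agent `i` and every item `e ∈ X_i`,
`c(X_i - e) ≤ c(M)/n`. -/
theorem loadBalancing_PROPX (n m : ℕ) (hn : 0 < n) (c : Fin m → ℝ)
    (hc0 : ∀ e, 0 ≤ c e)
    (hsort : ∀ j k : Fin m, j ≤ k → c k ≤ c j)
    (a : Fin m → Fin n)
    (halg : ∀ (j : Fin m) (i : Fin n),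
      ∑ e ∈ Finset.univ.filter (fun e => e < j ∧ a e = a j), c e ≤
        ∑ e ∈ Finset.univ.filter (fun e => e < j ∧ a e = i), c e) :
    ∀ (i : Fin n) (e : Fin m), a e = i →
      ∑ e' ∈ Finset.univ.filter (fun e' => a e' = i ∧ e' ≠ e), c e' ≤
        (∑ e', c e') / n :=
  loadBalancing_PROPX_general n m c hc0 hsort a halg
end

section
/- Let X be the allocation produced by the Load Balancing Algorithm for n agents with an identical additive cost function c where every item has cost at most 1. Then the total subsidy ∑_i max{c(X_i) − c(M)/n, 0} is at most n/4 when n is even, and at most (n²−1)/(4n) when n is odd. -/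
/-!
Write `L i` for the cost of agent `i`'s bundle. When the last item `j` of bundle `i` was
allocated, `i` had minimum load, so `L i - c j ≤ L k` for every `k`; as `c j ≤ 1`, no two
loads differ by more than `1`. The excesses `d i = L i - c(M)/n` therefore sum to `0` and
differ pairwise by at most `1`. If `p` of them are positive, with total `P`, comparing each
positive excess with each non-positive one gives `q P ≤ p (q - P)` for `q = n - p`, i.e.
`n P ≤ p q`, and `4 p q ≤ n²`, with `4 p q ≤ n² - 1` when `n = p + q` is odd.
-/

open Finset

theorem four_mul_mul_add_one_le_sq_of_odd {p q : ℕ} (h : Odd (p + q)) :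
    4 * p * q + 1 ≤ (p + q) ^ 2 := by
  obtain ⟨k, hk⟩ := h
  have hpq : p * q ≤ k * (k + 1) := by
    rcases le_or_gt p k with hp | hp <;> nlinarith
  nlinarith

theorem exists_card_mul_sum_max_le {ι : Type*} [Fintype ι] (d : ι → ℝ) (hsum : ∑ i, d i = 0)
    (hd : ∀ i k, d i ≤ d k + 1) :
    ∃ p q : ℕ, p + q = Fintype.card ι ∧ Fintype.card ι * ∑ i, max (d i) 0 ≤ p * q := by
  classical
  set T := univ.filter fun i => 0 < d i
  set Tc := univ.filter fun i => ¬ 0 < d i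
  set P := ∑ i ∈ T, d i
  have hcard : #T + #Tc = Fintype.card ι := by rw [card_filter_add_card_filter_not, card_univ]
  refine ⟨#T, #Tc, hcard, ?_⟩
  have hpos : ∑ i, max (d i) 0 = P := by
    simp only [P, T, sum_filter]
    refine sum_congr rfl fun i _ => ?_
    split_ifs with h
    · exact max_eq_left h.le
    · exact max_eq_right (not_lt.mp h)
  have hneg : ∑ i ∈ Tc, d i = -P := by
    linarith [sum_filter_add_sum_filter_not univ (fun i => 0 < d i) d]
  have hcross : ∑ i ∈ T, ∑ _j ∈ Tc, d i ≤ ∑ _i ∈ T, ∑ j ∈ Tc, (d j + 1) :=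
    sum_le_sum fun i _ => sum_le_sum fun j _ => hd i j
  simp only [sum_const, sum_add_distrib, hneg, nsmul_eq_mul, mul_one, ← mul_sum] at hcross
  rw [hpos, ← hcard, Nat.cast_add]
  linarith

theorem greedy_sum_fiber_le_sum_fiber_add_one {α ι : Type*} [Fintype α] [LinearOrder α] [DecidableEq ι]
    (c : α → ℝ) (hc : ∀ e, 0 ≤ c e ∧ c e ≤ 1) (a : α → ι)
    (halg : ∀ (j : α) (i : ι),
      ∑ e ∈ univ.filter (fun e => e < j ∧ a e = a j), c e ≤
        ∑ e ∈ univ.filter (fun e => e < j ∧ a e = i), c e)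
    (i k : ι) :
    ∑ e ∈ univ.filter (fun e => a e = i), c e ≤ ∑ e ∈ univ.filter (fun e => a e = k), c e + 1 := by
  have hk : 0 ≤ ∑ e ∈ univ.filter (fun e => a e = k), c e := sum_nonneg fun e _ => (hc e).1
  obtain hempty | hne := (univ.filter fun e => a e = i).eq_empty_or_nonempty
  · rw [hempty, sum_empty]
    linarith
  set j := (univ.filter fun e => a e = i).max' hne
  have hja : a j = i := (mem_filter.1 (max'_mem _ hne)).2
  have hsplit :
      univ.filter (fun e => a e = i) = insert j (univ.filter fun e => e < j ∧ a e = i) := by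
    ext e
    simp only [mem_filter, mem_insert, mem_univ, true_and]
    refine ⟨fun he => ?_, ?_⟩
    · rcases (le_max' (univ.filter fun e => a e = i) e (by simpa using he)).lt_or_eq with h | h
      · exact Or.inr ⟨h, he⟩
      · exact Or.inl h
    · rintro (rfl | ⟨-, he⟩) <;> assumption
  have hmin := halg j k
  rw [hja] at hmin
  have hbefore : ∑ e ∈ univ.filter (fun e => e < j ∧ a e = k), c e ≤
      ∑ e ∈ univ.filter (fun e => a e = k), c e :=
    sum_le_sum_of_subset_of_nonneg (fun e he => by simp_all) fun e _ _ => (hc e).1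
  rw [hsplit, sum_insert (by simp)]
  linarith [(hc j).2]

theorem loadBalancing_subsidy_bound_general (n m : ℕ) (hn : 0 < n) (c : Fin m → ℝ)
    (hc : ∀ e, 0 ≤ c e ∧ c e ≤ 1)
    (a : Fin m → Fin n)
    (halg : ∀ (j : Fin m) (i : Fin n),
      ∑ e ∈ Finset.univ.filter (fun e => e < j ∧ a e = a j), c e ≤
        ∑ e ∈ Finset.univ.filter (fun e => e < j ∧ a e = i), c e) :
    (Even n →
      ∑ i : Fin n,
        max ((∑ e ∈ Finset.univ.filter (fun e => a e = i), c e) - (∑ e', c e') / n) 0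
        ≤ (n : ℝ) / 4) ∧
    (Odd n →
      ∑ i : Fin n,
        max ((∑ e ∈ Finset.univ.filter (fun e => a e = i), c e) - (∑ e', c e') / n) 0
        ≤ ((n : ℝ) ^ 2 - 1) / (4 * n)) := by
  have hn' : (0 : ℝ) < n := by exact_mod_cast hn
  set L : Fin n → ℝ := fun i => ∑ e ∈ univ.filter (fun e => a e = i), c e
  have hsum : ∑ i, (L i - (∑ e', c e') / n) = 0 := by
    rw [sum_sub_distrib, sum_fiberwise univ a c, sum_const, card_univ, Fintype.card_fin,
      nsmul_eq_mul, mul_div_cancel₀ _ hn'.ne', sub_self]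
  obtain ⟨p, q, hpq, hS⟩ := exists_card_mul_sum_max_le _ hsum fun i k => by
    linarith [greedy_sum_fiber_le_sum_fiber_add_one c hc a halg i k]
  rw [Fintype.card_fin] at hpq hS
  have hnpq : (n : ℝ) = p + q := by exact_mod_cast hpq.symm
  have hS' : ∑ i, max (L i - (∑ e', c e') / n) 0 ≤ p * q / n := by
    rw [le_div_iff₀ hn']
    linarith
  refine ⟨fun _ => hS'.trans ?_, fun hodd => hS'.trans ?_⟩
  · rw [div_le_div_iff₀ hn' (by norm_num), hnpq]
    nlinarith [four_mul_le_sq_add (p : ℝ) q]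
  · have hodd' : (4 * p * q + 1 : ℝ) ≤ (p + q) ^ 2 := by
      exact_mod_cast four_mul_mul_add_one_le_sq_of_odd (hpq ▸ hodd)
    rw [div_le_div_iff₀ hn' (by positivity), hnpq]
    nlinarith

/-- Total subsidy bound for the Load Balancing allocation with identical additive
costs where every item costs at most 1: `∑ i, max (c(X_i) - c(M)/n) 0 ≤ n/4` when
`n` is even, and `≤ (n² - 1)/(4n)` when `n` is odd. The run of the algorithm is
described by the assignment `a` as in the algorithm's invariant. -/
theorem loadBalancing_subsidy_bound (n m : ℕ) (hn : 0 < n) (c : Fin m → ℝ)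
    (hc : ∀ e, 0 ≤ c e ∧ c e ≤ 1)
    (hsort : ∀ j k : Fin m, j ≤ k → c k ≤ c j)
    (a : Fin m → Fin n)
    (halg : ∀ (j : Fin m) (i : Fin n),
      ∑ e ∈ Finset.univ.filter (fun e => e < j ∧ a e = a j), c e ≤
        ∑ e ∈ Finset.univ.filter (fun e => e < j ∧ a e = i), c e) :
    (Even n →
      ∑ i : Fin n,
        max ((∑ e ∈ Finset.univ.filter (fun e => a e = i), c e) - (∑ e', c e') / n) 0
        ≤ (n : ℝ) / 4) ∧
    (Odd n →
      ∑ i : Fin n,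
        max ((∑ e ∈ Finset.univ.filter (fun e => a e = i), c e) - (∑ e', c e') / n) 0
        ≤ ((n : ℝ) ^ 2 - 1) / (4 * n)) :=
  loadBalancing_subsidy_bound_general n m hn c hc a halg
end

section
/- Let N₁ = {i : c(X_i) > P} and N₂ = {i : c(X_i) ≤ P} where P = c(M)/n. Define h_i = P − c(X_i − e_{σ(i)}) for i ∈ N₁ (with e_{σ(i)} the last item i received) and h_i = P − c(X_i) for i ∈ N₂. If X is the Load Balancing allocation, then (a) h_i ≥ 0 for all i, (b) h_i ≥ h_j for all i ∈ N₁, j ∈ N₂, (c) ∑_{i∈N} h_i = ∑_{i∈N₁} c(e_{σ(i)}) ≤ |N₁|, and (d) the total subsidy equals ∑_{i∈N₂} h_i ≤ |N₁|·|N₂|/n. -/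
open Finset

/-- Cost of agent `i`'s bundle under the assignment `a`. -/
noncomputable def bundleCost (n m : ℕ) (c : Fin m → ℝ) (a : Fin m → Fin n) (i : Fin n) : ℝ :=
  ∑ e ∈ Finset.univ.filter (fun e => a e = i), c e

/-- The proportional share `c(M)/n`. -/
noncomputable def propShare (n m : ℕ) (c : Fin m → ℝ) : ℝ := (∑ e, c e) / n

/-!
Load Balancing gives item `σ i` to `i` only when `i`'s bundle built so far is the cheapest, so
`c(X_i) - c(e_{σ(i)}) ≤ c(X_j)` for every `j`; since some bundle costs at most `P`, this gives
(a) and (b). The `P - c(X_i)` sum to zero, so `∑ h_i` is the sum of the last items of `N₁`, and the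
subsidy, which is the excess of `N₁` over `P`, equals the deficit `∑_{i ∈ N₂} h_i` of `N₂`. Finally
(b) says every `h_j`, `j ∈ N₂`, is at most every `h_i`, `i ∈ N₁`; so `N₂` holds at most its
`|N₂|/n` share of the total `∑ h_i ≤ |N₁|`.
-/

theorem card_mul_sum_le_card_mul_sum_of_le {ι : Type*} {s t : Finset ι} {h : ι → ℝ}
    (hle : ∀ i ∈ s, ∀ j ∈ t, h j ≤ h i) :
    (#s : ℝ) * ∑ j ∈ t, h j ≤ (#t : ℝ) * ∑ i ∈ s, h i := by
  calc (#s : ℝ) * ∑ j ∈ t, h j = ∑ _i ∈ s, ∑ j ∈ t, h j := by rw [sum_const, nsmul_eq_mul]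
    _ ≤ ∑ i ∈ s, ∑ _j ∈ t, h i := sum_le_sum fun i hi => sum_le_sum fun j hj => hle i hi j hj
    _ = (#t : ℝ) * ∑ i ∈ s, h i := by simp only [sum_const, nsmul_eq_mul, mul_sum]

theorem sum_filter_not_le_card_mul_card_div {ι : Type*} (s : Finset ι) (p : ι → Prop)
    [DecidablePred p] {h : ι → ℝ}
    (hle : ∀ i ∈ s, ∀ j ∈ s, p i → ¬p j → h j ≤ h i) (hsum : ∑ i ∈ s, h i ≤ #(s.filter p)) :
    ∑ j ∈ s.filter (¬p ·), h j ≤ #(s.filter p) * #(s.filter (¬p ·)) / #s := by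
  rcases s.eq_empty_or_nonempty with rfl | hs
  · simp
  set S₁ := ∑ i ∈ s.filter p, h i
  set S₂ := ∑ j ∈ s.filter (¬p ·), h j
  have hcard : (#(s.filter p) : ℝ) + #(s.filter (¬p ·)) = #s := by
    exact_mod_cast card_filter_add_card_filter_not p
  have hsplit : S₁ + S₂ = ∑ i ∈ s, h i := sum_filter_add_sum_filter_not s p h
  have hcross : (#(s.filter p) : ℝ) * S₂ ≤ #(s.filter (¬p ·)) * S₁ :=
    card_mul_sum_le_card_mul_sum_of_le fun i hi j hj =>
      hle i (mem_filter.1 hi).1 j (mem_filter.1 hj).1 (mem_filter.1 hi).2 (mem_filter.1 hj).2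
  have htotal : (#(s.filter (¬p ·)) : ℝ) * (S₁ + S₂) ≤ #(s.filter (¬p ·)) * #(s.filter p) :=
    mul_le_mul_of_nonneg_left (hsplit ▸ hsum) (Nat.cast_nonneg _)
  rw [le_div_iff₀ (by exact_mod_cast hs.card_pos), ← hcard]
  nlinarith

section LoadBalancing

variable {n m : ℕ} {c : Fin m → ℝ} {a : Fin m → Fin n}

theorem sum_bundleCost : ∑ i, bundleCost n m c a i = ∑ e, c e :=
  sum_fiberwise univ a c

theorem sum_propShare_sub_bundleCost (hn : 0 < n) :
    ∑ i, (propShare n m c - bundleCost n m c a i) = 0 := by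
  rw [sum_sub_distrib, sum_bundleCost, sum_const, card_univ, Fintype.card_fin, nsmul_eq_mul,
    propShare, mul_div_cancel₀ _ (by positivity), sub_self]

theorem exists_bundleCost_le_propShare (hn : 0 < n) :
    ∃ j, bundleCost n m c a j ≤ propShare n m c := by
  have hsum : ∑ i, bundleCost n m c a i ≤ ∑ _i : Fin n, propShare n m c := by
    rw [← sub_nonneg, ← sum_sub_distrib, sum_propShare_sub_bundleCost hn]
  obtain ⟨j, -, hj⟩ := exists_le_of_sum_le (univ_nonempty_iff.2 ⟨⟨0, hn⟩⟩) hsum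
  exact ⟨j, hj⟩

theorem bundleCost_eq_sum_lt_add {i : Fin n} {l : Fin m} (hl : a l = i)
    (hmax : ∀ e, a e = i → e ≤ l) :
    bundleCost n m c a i = ∑ e ∈ univ.filter (fun e => e < l ∧ a e = i), c e + c l := by
  have hbundle : univ.filter (fun e => a e = i) =
      insert l (univ.filter fun e => e < l ∧ a e = i) := by
    ext e
    simp only [mem_filter, mem_univ, true_and, mem_insert]
    constructor
    · intro he
      exact (hmax e he).eq_or_lt.imp id fun hlt => ⟨hlt, he⟩
    · rintro (rfl | ⟨-, he⟩)
      exacts [hl, he]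
  rw [bundleCost, hbundle, sum_insert (by simp), add_comm]

theorem sum_filter_lt_le_bundleCost (hc : ∀ e, 0 ≤ c e) (l : Fin m) (i : Fin n) :
    ∑ e ∈ univ.filter (fun e => e < l ∧ a e = i), c e ≤ bundleCost n m c a i :=
  sum_le_sum_of_subset_of_nonneg (fun _ he => by simp_all) fun e _ _ => hc e

theorem bundleCost_sub_le_bundleCost (hc : ∀ e, 0 ≤ c e)
    (halg : ∀ (l : Fin m) (j : Fin n),
      ∑ e ∈ univ.filter (fun e => e < l ∧ a e = a l), c e ≤
        ∑ e ∈ univ.filter (fun e => e < l ∧ a e = j), c e)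
    {i : Fin n} {l : Fin m} (hl : a l = i) (hmax : ∀ e, a e = i → e ≤ l) (j : Fin n) :
    bundleCost n m c a i - c l ≤ bundleCost n m c a j := by
  have hcheapest := halg l j
  rw [hl] at hcheapest
  linarith [bundleCost_eq_sum_lt_add (c := c) hl hmax, sum_filter_lt_le_bundleCost (a := a) hc l j]

end LoadBalancing

theorem loadBalancing_h_properties_general (n m : ℕ) (hn : 0 < n) (c : Fin m → ℝ)
    (hc : ∀ e, 0 ≤ c e ∧ c e ≤ 1)
    (a : Fin m → Fin n)
    (halg : ∀ (j : Fin m) (i : Fin n),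
      ∑ e ∈ Finset.univ.filter (fun e => e < j ∧ a e = a j), c e ≤
        ∑ e ∈ Finset.univ.filter (fun e => e < j ∧ a e = i), c e)
    (σ : Fin n → Fin m)
    (hσ : ∀ i : Fin n, propShare n m c < bundleCost n m c a i →
      a (σ i) = i ∧ ∀ e : Fin m, a e = i → e ≤ σ i)
    (h : Fin n → ℝ)
    (hdef : ∀ i : Fin n, h i =
      if propShare n m c < bundleCost n m c a i
      then propShare n m c - (bundleCost n m c a i - c (σ i))
      else propShare n m c - bundleCost n m c a i) :
    (∀ i, 0 ≤ h i) ∧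
    (∀ i j : Fin n, propShare n m c < bundleCost n m c a i →
      bundleCost n m c a j ≤ propShare n m c → h j ≤ h i) ∧
    (∑ i, h i =
        ∑ i ∈ Finset.univ.filter (fun i => propShare n m c < bundleCost n m c a i), c (σ i) ∧
      ∑ i, h i ≤
        ((Finset.univ.filter (fun i => propShare n m c < bundleCost n m c a i)).card : ℝ)) ∧
    (∑ i ∈ Finset.univ.filter (fun i => propShare n m c < bundleCost n m c a i),
        (bundleCost n m c a i - propShare n m c) =
      ∑ i ∈ Finset.univ.filter (fun i => ¬ propShare n m c < bundleCost n m c a i), h i ∧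
      ∑ i ∈ Finset.univ.filter (fun i => ¬ propShare n m c < bundleCost n m c a i), h i ≤
        ((Finset.univ.filter (fun i => propShare n m c < bundleCost n m c a i)).card : ℝ) *
          ((Finset.univ.filter (fun i => ¬ propShare n m c < bundleCost n m c a i)).card : ℝ) /
            n) := by
  set P := propShare n m c
  set B := bundleCost n m c a
  have hlast (i : Fin n) (hi : P < B i) (j : Fin n) : B i - c (σ i) ≤ B j :=
    bundleCost_sub_le_bundleCost (fun e => (hc e).1) halg (hσ i hi).1 (hσ i hi).2 j
  have hdef' (i : Fin n) : h i = P - B i + if P < B i then c (σ i) else 0 := by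
    rw [hdef]; split_ifs <;> ring
  have hzero : ∑ i, (P - B i) = 0 := sum_propShare_sub_bundleCost hn
  have hN₂ (i : Fin n) (hi : ¬P < B i) : h i = P - B i := by simp [hdef', hi]
  have hN₂_le_N₁ (i j : Fin n) (hi : P < B i) (hj : B j ≤ P) : h j ≤ h i := by
    rw [hdef' i, if_pos hi, hN₂ j hj.not_gt]; linarith [hlast i hi j]
  have hsum_eq : ∑ i, h i = ∑ i ∈ univ.filter (P < B ·), c (σ i) := by
    simp only [hdef', sum_add_distrib, hzero, zero_add, sum_ite, sum_const_zero, add_zero]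
  have hsum_le : ∑ i, h i ≤ #(univ.filter (P < B ·)) :=
    hsum_eq ▸ (sum_le_card_nsmul _ _ 1 fun i _ => (hc (σ i)).2).trans_eq (by simp)
  refine ⟨fun i => ?_, hN₂_le_N₁, ⟨hsum_eq, hsum_le⟩, ?_, ?_⟩
  · obtain ⟨j, hj⟩ := exists_bundleCost_le_propShare (a := a) hn
    rw [hdef']; split_ifs with hi
    · linarith [hlast i hi j, (hc (σ i)).1]
    · linarith [not_lt.1 hi]
  · rw [← sum_filter_add_sum_filter_not univ (P < B ·)] at hzero
    rw [sum_congr rfl fun i hi => hN₂ i (mem_filter.1 hi).2]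
    simp only [sum_sub_distrib] at hzero ⊢
    linarith
  · simpa using sum_filter_not_le_card_mul_card_div univ (P < B ·)
      (fun i _ j _ hi hj => hN₂_le_N₁ i j hi (not_lt.1 hj)) hsum_le

/-- Properties of the quantities `h_i` for the Load Balancing allocation.
`N₁ = {i : c(X_i) > P}`, `N₂ = {i : c(X_i) ≤ P}` with `P = c(M)/n`;
`σ i` is the last item agent `i` received (for `i ∈ N₁`);
`h_i = P - c(X_i - e_{σ(i)})` for `i ∈ N₁` and `h_i = P - c(X_i)` for `i ∈ N₂`.
Then (a) `h_i ≥ 0`; (b) `h_i ≥ h_j` for `i ∈ N₁, j ∈ N₂`;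
(c) `∑ h_i = ∑_{i ∈ N₁} c(e_{σ(i)}) ≤ |N₁|`;
(d) the total subsidy `∑_{i ∈ N₁} (c(X_i) - P)` equals `∑_{i ∈ N₂} h_i ≤ |N₁|·|N₂|/n`. -/
theorem loadBalancing_h_properties (n m : ℕ) (hn : 0 < n) (c : Fin m → ℝ)
    (hc : ∀ e, 0 ≤ c e ∧ c e ≤ 1)
    (hsort : ∀ j k : Fin m, j ≤ k → c k ≤ c j)
    (a : Fin m → Fin n)
    (halg : ∀ (j : Fin m) (i : Fin n),
      ∑ e ∈ Finset.univ.filter (fun e => e < j ∧ a e = a j), c e ≤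
        ∑ e ∈ Finset.univ.filter (fun e => e < j ∧ a e = i), c e)
    (σ : Fin n → Fin m)
    (hσ : ∀ i : Fin n, propShare n m c < bundleCost n m c a i →
      a (σ i) = i ∧ ∀ e : Fin m, a e = i → e ≤ σ i)
    (h : Fin n → ℝ)
    (hdef : ∀ i : Fin n, h i =
      if propShare n m c < bundleCost n m c a i
      then propShare n m c - (bundleCost n m c a i - c (σ i))
      else propShare n m c - bundleCost n m c a i) :
    (∀ i, 0 ≤ h i) ∧
    (∀ i j : Fin n, propShare n m c < bundleCost n m c a i →
      bundleCost n m c a j ≤ propShare n m c → h j ≤ h i) ∧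
    (∑ i, h i =
        ∑ i ∈ Finset.univ.filter (fun i => propShare n m c < bundleCost n m c a i), c (σ i) ∧
      ∑ i, h i ≤
        ((Finset.univ.filter (fun i => propShare n m c < bundleCost n m c a i)).card : ℝ)) ∧
    (∑ i ∈ Finset.univ.filter (fun i => propShare n m c < bundleCost n m c a i),
        (bundleCost n m c a i - propShare n m c) =
      ∑ i ∈ Finset.univ.filter (fun i => ¬ propShare n m c < bundleCost n m c a i), h i ∧
      ∑ i ∈ Finset.univ.filter (fun i => ¬ propShare n m c < bundleCost n m c a i), h i ≤
        ((Finset.univ.filter (fun i => propShare n m c < bundleCost n m c a i)).card : ℝ) *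
          ((Finset.univ.filter (fun i => ¬ propShare n m c < bundleCost n m c a i)).card : ℝ) /
            n) :=
  loadBalancing_h_properties_general n m hn c hc a halg σ hσ h hdef
end

section
/- If for every identical-ordering (IDO) instance there is an allocation and subsidies achieving proportionality with total subsidy at most α, then for every instance (with general additive cost functions, not necessarily IDO) there also exists a proportional-with-subsidy allocation with total subsidy at most α. -/
/-!
Give every agent the IDO instance whose `k`-th item costs her `k`-th largest cost; it has the
same total costs, so a PROPS allocation `a` of it with subsidies `s` keeps the same right-hand
sides. Item `k` of the IDO instance is then replaced by a genuine item `F k` that costs agent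
`a k` at most her `k`-th largest cost. Such items exist by Hall's theorem: at least `m - k` items
qualify for position `k`, and a set of positions with smallest element `k` has at most `m - k`
elements.
-/

open Finset

/-- The `k`-th largest entry of `v` (counting from `0`). -/
def sortDesc {α : Type*} [LinearOrder α] {m : ℕ} (v : Fin m → α) (k : Fin m) : α :=
  v (Tuple.sort v k.rev)

section SortDesc

variable {α : Type*} [LinearOrder α] {m : ℕ}

theorem antitone_sortDesc (v : Fin m → α) : Antitone (sortDesc v) :=
  fun _ _ hjk => Tuple.monotone_sort v (Fin.rev_le_rev.mpr hjk)

theorem sum_sortDesc [AddCommMonoid α] (v : Fin m → α) : ∑ k, sortDesc v k = ∑ e, v e :=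
  Fintype.sum_equiv (Fin.revPerm.trans (Tuple.sort v)) _ _ fun _ => rfl

theorem sub_le_card_filter_le_sortDesc (v : Fin m → α) (k : Fin m) :
    m - k ≤ #(univ.filter fun e => v e ≤ sortDesc v k) := by
  have hsub : (Iic k.rev).image (Tuple.sort v) ⊆ univ.filter fun e => v e ≤ sortDesc v k := by
    intro e he
    obtain ⟨j, hj, rfl⟩ := mem_image.mp he
    exact mem_filter.mpr ⟨mem_univ _, Tuple.monotone_sort v (mem_Iic.mp hj)⟩
  calc m - (k : ℕ) = #(Iic k.rev) := by rw [Fin.card_Iic, Fin.val_rev]; omega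
    _ = #((Iic k.rev).image (Tuple.sort v)) :=
      (card_image_of_injective _ (Tuple.sort v).injective).symm
    _ ≤ _ := card_le_card hsub

end SortDesc

theorem exists_injective_mem_of_sub_le_card {α : Type*} [DecidableEq α] {m : ℕ}
    (t : Fin m → Finset α) (ht : ∀ k, m - k ≤ #(t k)) :
    ∃ f : Fin m → α, Function.Injective f ∧ ∀ k, f k ∈ t k := by
  refine (all_card_le_biUnion_card_iff_exists_injective t).mp fun S => ?_
  rcases S.eq_empty_or_nonempty with rfl | hS
  · simp
  calc #S ≤ #(Ici (S.min' hS)) := card_le_card fun x hx => mem_Ici.mpr (S.min'_le x hx)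
    _ = m - S.min' hS := Fin.card_Ici _
    _ ≤ #(t (S.min' hS)) := ht _
    _ ≤ #(S.biUnion t) := card_le_card (subset_biUnion_of_mem t (S.min'_mem hS))

theorem sum_filter_perm_symm_le {ι N : Type*} [Fintype ι] [DecidableEq N]
    (a : ι → N) (F : Equiv.Perm ι) (c c' : N → ι → ℝ) (h : ∀ k, c (a k) (F k) ≤ c' (a k) k)
    (i : N) :
    ∑ e ∈ univ.filter (fun e => a (F.symm e) = i), c i e
      ≤ ∑ k ∈ univ.filter (fun k => a k = i), c' i k := by
  rw [← sum_equiv F (s := univ.filter fun k => a k = i) (g := c i) (fun _ => by simp)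
    fun _ _ => rfl]
  refine sum_le_sum fun k hk => ?_
  obtain rfl := (mem_filter.mp hk).2
  exact h k

theorem IDO_reduction_general (n m : ℕ) (α : ℝ)
    (hIDO : ∀ c : Fin n → Fin m → ℝ,
      (∀ i e, 0 ≤ c i e ∧ c i e ≤ 1) →
      (∀ (i : Fin n) (j k : Fin m), j ≤ k → c i k ≤ c i j) →
      ∃ (a : Fin m → Fin n) (s : Fin n → ℝ),
        (∀ i, 0 ≤ s i) ∧
        (∀ i : Fin n,
          (∑ e ∈ Finset.univ.filter (fun e => a e = i), c i e) - s i ≤ (∑ e, c i e) / n) ∧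
        ∑ i, s i ≤ α) :
    ∀ c : Fin n → Fin m → ℝ,
      (∀ i e, 0 ≤ c i e ∧ c i e ≤ 1) →
      ∃ (a : Fin m → Fin n) (s : Fin n → ℝ),
        (∀ i, 0 ≤ s i) ∧
        (∀ i : Fin n,
          (∑ e ∈ Finset.univ.filter (fun e => a e = i), c i e) - s i ≤ (∑ e, c i e) / n) ∧
        ∑ i, s i ≤ α := by
  intro c hc
  let c' : Fin n → Fin m → ℝ := fun i => sortDesc (c i)
  obtain ⟨a, s, hs, hprops, hsum⟩ :=
    hIDO c' (fun i _ => hc i _) fun i _ _ hjk => antitone_sortDesc (c i) hjk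
  obtain ⟨f, hf, hft⟩ := exists_injective_mem_of_sub_le_card
    (fun k => univ.filter fun e => c (a k) e ≤ c' (a k) k)
    fun k => sub_le_card_filter_le_sortDesc (c (a k)) k
  let F : Equiv.Perm (Fin m) := Equiv.ofBijective f hf.bijective_of_finite
  refine ⟨fun e => a (F.symm e), s, hs, fun i => ?_, hsum⟩
  calc (∑ e ∈ univ.filter (fun e => a (F.symm e) = i), c i e) - s i
      ≤ (∑ k ∈ univ.filter (fun k => a k = i), c' i k) - s i :=
        sub_le_sub_right
          (sum_filter_perm_symm_le a F c c' (fun k => (mem_filter.mp (hft k)).2) i) _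
    _ ≤ (∑ k, c' i k) / n := hprops i
    _ = (∑ e, c i e) / n := by rw [sum_sortDesc]

/-- Reduction from general instances to identical-ordering (IDO) instances for
proportionality with subsidy (chores). An instance is given by additive costs
`c i e ∈ [0,1]`; it is IDO if every agent's costs are non-increasing in the item
index. An allocation `a` with subsidies `s ≥ 0` is PROPS if
`c_i(X_i) - s_i ≤ c_i(M)/n` for all `i`. If every IDO instance admits a PROPS
allocation with total subsidy at most `α`, then so does every instance. -/
theorem IDO_reduction (n m : ℕ) (hn : 0 < n) (α : ℝ)
    (hIDO : ∀ c : Fin n → Fin m → ℝ,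
      (∀ i e, 0 ≤ c i e ∧ c i e ≤ 1) →
      (∀ (i : Fin n) (j k : Fin m), j ≤ k → c i k ≤ c i j) →
      ∃ (a : Fin m → Fin n) (s : Fin n → ℝ),
        (∀ i, 0 ≤ s i) ∧
        (∀ i : Fin n,
          (∑ e ∈ Finset.univ.filter (fun e => a e = i), c i e) - s i ≤ (∑ e, c i e) / n) ∧
        ∑ i, s i ≤ α) :
    ∀ c : Fin n → Fin m → ℝ,
      (∀ i e, 0 ≤ c i e ∧ c i e ≤ 1) →
      ∃ (a : Fin m → Fin n) (s : Fin n → ℝ),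
        (∀ i, 0 ≤ s i) ∧
        (∀ i : Fin n,
          (∑ e ∈ Finset.univ.filter (fun e => a e = i), c i e) - s i ≤ (∑ e, c i e) / n) ∧
        ∑ i, s i ≤ α :=
  IDO_reduction_general n m α hIDO
end

section
/- In the reverse-order picking procedure, if at round j agent i picks her minimum-cost item from a set P of exactly j remaining items, then the cost of the picked item is at most c'_i(e_j), the j-th largest item cost of agent i; consequently the bundle agent i builds satisfies c_i(X_i) ≤ c'_i(X'_i). -/
open Finset

/-- Pigeonhole: the `m - j` items `s l` with `l ≥ j` cannot all be among the `m - j - 1`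
items `p k` with `k > j`. -/
theorem Fin.exists_ge_forall_gt_ne {α : Type*} [DecidableEq α] {m : ℕ} {p s : Fin m → α}
    (hp : Function.Injective p) (hs : Function.Injective s) (j : Fin m) :
    ∃ l, j ≤ l ∧ ∀ k, j < k → p k ≠ s l := by
  have hcard : ((Ioi j).image p).card < ((Ici j).image s).card := by
    rw [card_image_of_injective _ hp, card_image_of_injective _ hs, Fin.card_Ioi, Fin.card_Ici]
    omega
  obtain ⟨_, hl, hnot⟩ := exists_mem_notMem_of_card_lt_card hcard
  obtain ⟨l, hjl, rfl⟩ := mem_image.mp hl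
  exact ⟨l, mem_Ici.mp hjl, fun k hjk hk => hnot (mem_image.mpr ⟨k, mem_Ioi.mpr hjk, hk⟩)⟩

theorem Fin.le_of_min_over_unpicked {α β : Type*} [DecidableEq α] [Preorder β] {m : ℕ}
    {p s : Fin m → α} (hp : Function.Injective p) (hs : Function.Injective s) {f : α → β}
    (hf : Antitone (f ∘ s)) (j : Fin m)
    (hmin : ∀ e, (∀ k, j < k → p k ≠ e) → f (p j) ≤ f e) :
    f (p j) ≤ f (s j) := by
  obtain ⟨l, hjl, hfree⟩ := Fin.exists_ge_forall_gt_ne hp hs j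
  exact (hmin (s l) hfree).trans (hf hjl)

/-- The reverse-order picking procedure. `a' j` is the agent owning item `e_j` in
the IDO allocation `X'`; `σ i` sorts agent `i`'s costs non-increasingly, so
`c i (σ i j)` is agent `i`'s `(j+1)`-th largest item cost. In round `j`
(rounds processed in decreasing order of `j`), agent `a' j` picks item `p j`,
a minimum-cost item among those not picked in later rounds (a set of exactly
`j+1` items). Then the picked item's cost is at most the corresponding sorted
cost, `c (a' j) (p j) ≤ c (a' j) (σ (a' j) j)`, and consequently
`c_i(X_i) ≤ c'_i(X'_i)` for every agent `i`. -/
theorem reverse_picking (n m : ℕ) (c : Fin n → Fin m → ℝ) (a' : Fin m → Fin n)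
    (σ : Fin n → Equiv.Perm (Fin m))
    (hσ : ∀ (i : Fin n) (j k : Fin m), j ≤ k → c i (σ i k) ≤ c i (σ i j))
    (p : Fin m → Fin m) (hp : Function.Injective p)
    (hmin : ∀ j e : Fin m, (∀ k : Fin m, j < k → p k ≠ e) →
      c (a' j) (p j) ≤ c (a' j) e) :
    (∀ j : Fin m, c (a' j) (p j) ≤ c (a' j) (σ (a' j) j)) ∧
    ∀ i : Fin n,
      ∑ j ∈ Finset.univ.filter (fun j => a' j = i), c i (p j) ≤
        ∑ j ∈ Finset.univ.filter (fun j => a' j = i), c i (σ i j) := by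
  have round_le : ∀ j, c (a' j) (p j) ≤ c (a' j) (σ (a' j) j) := fun j =>
    Fin.le_of_min_over_unpicked hp (σ (a' j)).injective (fun _ _ h => hσ (a' j) _ _ h) j (hmin j)
  refine ⟨round_le, fun i => sum_le_sum fun j hj => ?_⟩
  obtain rfl := (mem_filter.mp hj).2
  exact round_le j
end

section
/- Under the up rounding of the Moving Knife fractional allocation with n−1 fractional items, the subsidies satisfy s_1 ≤ 1 − x_1, s_n = 0, and s_i ≤ max{x_{i−1} − x_i, 0} for all 2 ≤ i ≤ n−1. -/
/-! Agent `i`'s subsidy is what the items gained under up rounding cost it beyond its fractional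
share: it gains `1 - x i` of `e_i` and gives up `1 - x (i-1)` of `e_(i-1)`. By IDO the item given up
costs at least as much as the one gained, so pricing both at `c i (e_i)` overestimates the subsidy,
giving `(x (i-1) - x i) · c i (e_i)`, and a cost in `[0, 1]` can only shrink the positive part. -/

section

variable {R : Type*} [CommRing R] [LinearOrder R] [IsStrictOrderedRing R]

theorem sub_one_mul_add_one_sub_mul_le {a b p q : R} (ha : a ≤ 1) (hqp : q ≤ p) :
    (a - 1) * p + (1 - b) * q ≤ (a - b) * q :=
  calc (a - 1) * p + (1 - b) * q
      ≤ (a - 1) * q + (1 - b) * q := by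
        gcongr ?_ + _; exact mul_le_mul_of_nonpos_left hqp (sub_nonpos.2 ha)
    _ = (a - b) * q := by ring

theorem mul_le_max_zero {t q : R} (hq₀ : 0 ≤ q) (hq₁ : q ≤ 1) : t * q ≤ max t 0 :=
  calc t * q ≤ max t 0 * q := mul_le_mul_of_nonneg_right (le_max_left t 0) hq₀
    _ ≤ max t 0 := mul_le_of_le_one_right (le_max_right t 0) hq₁

theorem max_subsidy_le {a b p q : R} (ha : a ≤ 1) (hq₀ : 0 ≤ q) (hq₁ : q ≤ 1) (hqp : q ≤ p) :
    max ((a - 1) * p + (1 - b) * q) 0 ≤ max (a - b) 0 :=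
  max_le ((sub_one_mul_add_one_sub_mul_le ha hqp).trans (mul_le_max_zero hq₀ hq₁))
    (le_max_right _ _)

end

/-- Up rounding of the Moving Knife fractional allocation with `n-1` fractional
items. Fractional item `e_i` (for `1 ≤ i ≤ n-1`) is shared by agents `i` and
`i+1`, with agent `i` holding fraction `x i ∈ [0,1]`; `c i e` is agent `i`'s
cost for item `e`, with `c i e ∈ [0,1]` and the IDO property
`c i (e_i) ≤ c i (e_{i-1})`. Up rounding gives each `e_i` fully to agent `i`,
so `s 1 = (1 - x 1)·c 1 (e_1)`, `s n = 0`, and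
`s i = max{(x_{i-1} - 1)·c_i(e_{i-1}) + (1 - x_i)·c_i(e_i), 0}` for
`2 ≤ i ≤ n-1`. Then `s 1 ≤ 1 - x 1`, `s n = 0`, and
`s i ≤ max{x_{i-1} - x_i, 0}` for `2 ≤ i ≤ n-1`. -/
theorem upRounding_subsidy (n : ℕ) (hn : 2 ≤ n) (x : ℕ → ℝ) (c : ℕ → ℕ → ℝ)
    (s : ℕ → ℝ)
    (hx : ∀ i, 1 ≤ i → i ≤ n - 1 → 0 ≤ x i ∧ x i ≤ 1)
    (hc : ∀ i e, 0 ≤ c i e ∧ c i e ≤ 1)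
    (hIDO : ∀ i, c i i ≤ c i (i - 1))
    (hs1 : s 1 = (1 - x 1) * c 1 1)
    (hsn : s n = 0)
    (hsi : ∀ i, 2 ≤ i → i ≤ n - 1 →
      s i = max ((x (i - 1) - 1) * c i (i - 1) + (1 - x i) * c i i) 0) :
    s 1 ≤ 1 - x 1 ∧ s n = 0 ∧
      ∀ i, 2 ≤ i → i ≤ n - 1 → s i ≤ max (x (i - 1) - x i) 0 := by
  refine ⟨?_, hsn, fun i hi₂ hin => ?_⟩
  · rw [hs1]
    exact mul_le_of_le_one_right (sub_nonneg.2 (hx 1 le_rfl (by omega)).2) (hc 1 1).2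
  · rw [hsi i hi₂ hin]
    exact max_subsidy_le (hx (i - 1) (by omega) (by omega)).2 (hc i i).1 (hc i i).2 (hIDO i)
end

section
/- Under the threshold rounding (each fractional item e_i goes to whichever of agents i, i+1 holds the larger fraction of it), the total subsidy is at most ∑_{i=1}^{n−1} min{x_i, 1 − x_i}. -/
/-!
Each fractional item `e_i` is split as `x_i` to agent `i` and `1 - x_i` to agent `i + 1`.
Rounding it to agent `i` (when `x_i ≥ 1/2`) raises her cost by at most `1 - x_i`; rounding it
to agent `i + 1` (when `x_i < 1/2`) raises his cost by at most `x_i`. Either way the item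
contributes at most `min x_i (1 - x_i)` to the total subsidy, and the subsidy of agent `i` is
bounded by the contributions of her two items `e_{i-1}` and `e_i`.
-/

open Finset

namespace ThresholdRounding

noncomputable def thresholdRound (t : ℝ) : ℝ := if 1 / 2 ≤ t then 1 else 0

/-- Bound on the cost increase of the agent holding fraction `t` of an item. -/
noncomputable def leftExcess (t : ℝ) : ℝ := if 1 / 2 ≤ t then 1 - t else 0

/-- Bound on the cost increase of the agent holding fraction `1 - t` of an item. -/
noncomputable def rightExcess (t : ℝ) : ℝ := if 1 / 2 ≤ t then 0 else t

theorem leftExcess_add_rightExcess (t : ℝ) : leftExcess t + rightExcess t = min t (1 - t) := by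
  unfold leftExcess rightExcess
  split_ifs with h
  · rw [min_eq_right (by linarith), add_zero]
  · rw [min_eq_left (by linarith), zero_add]

@[simp]
theorem leftExcess_one : leftExcess 1 = 0 := by norm_num [leftExcess]

@[simp]
theorem rightExcess_one : rightExcess 1 = 0 := by norm_num [rightExcess]

@[simp]
theorem thresholdRound_one : thresholdRound 1 = 1 := by norm_num [thresholdRound]

section

variable {t c : ℝ}

theorem mul_le_leftExcess (ht : t ∈ Set.Icc 0 1) (hc : c ∈ Set.Icc 0 1) :
    (thresholdRound t - t) * c ≤ leftExcess t := by
  unfold thresholdRound leftExcess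
  split_ifs
  · exact mul_le_of_le_one_right (by linarith [ht.2]) hc.2
  · exact mul_nonpos_of_nonpos_of_nonneg (by linarith [ht.1]) hc.1

theorem mul_le_rightExcess (ht : t ∈ Set.Icc 0 1) (hc : c ∈ Set.Icc 0 1) :
    (t - thresholdRound t) * c ≤ rightExcess t := by
  unfold thresholdRound rightExcess
  split_ifs
  · exact mul_nonpos_of_nonpos_of_nonneg (by linarith [ht.2]) hc.1
  · simpa using mul_le_of_le_one_right ht.1 hc.2

theorem leftExcess_nonneg (ht : t ≤ 1) : 0 ≤ leftExcess t := by
  unfold leftExcess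
  split_ifs <;> linarith

theorem rightExcess_nonneg (ht : 0 ≤ t) : 0 ≤ rightExcess t := by
  unfold rightExcess
  split_ifs <;> linarith

end

theorem subsidy_le_rightExcess_add_leftExcess {a b c d : ℝ} (ha : a ∈ Set.Icc 0 1)
    (hb : b ∈ Set.Icc 0 1) (hc : c ∈ Set.Icc 0 1) (hd : d ∈ Set.Icc 0 1) :
    max ((a - thresholdRound a) * c + (thresholdRound b - b) * d) 0 ≤
      rightExcess a + leftExcess b :=
  max_le (add_le_add (mul_le_rightExcess ha hc) (mul_le_leftExcess hb hd))
    (add_nonneg (rightExcess_nonneg ha.1) (leftExcess_nonneg hb.2))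

theorem sum_Icc_succ_shift_add (f g : ℕ → ℝ) (k : ℕ) :
    ∑ i ∈ Icc 1 (k + 1), (f (i - 1) + g i) = f 0 + g (k + 1) + ∑ i ∈ Icc 1 k, (f i + g i) := by
  induction k with
  | zero => simp
  | succ k ih =>
    rw [sum_Icc_succ_top (by omega), ih, sum_Icc_succ_top (by omega), Nat.add_sub_cancel]
    ring

theorem sum_Icc_shift_add_of_boundary (f g : ℕ → ℝ) (n : ℕ) (hf : f 0 = 0) (hg : g n = 0) :
    ∑ i ∈ Icc 1 n, (f (i - 1) + g i) = ∑ i ∈ Icc 1 (n - 1), (f i + g i) := by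
  cases n with
  | zero => simp
  | succ k => rw [sum_Icc_succ_shift_add, hf, hg, Nat.add_sub_cancel, zero_add, zero_add]

end ThresholdRounding

open ThresholdRounding in
theorem thresholdRounding_subsidy_general (n : ℕ) (x xh : ℕ → ℝ)
    (c : ℕ → ℕ → ℝ) (s : ℕ → ℝ)
    (hx : ∀ i, 1 ≤ i → i ≤ n - 1 → 0 ≤ x i ∧ x i ≤ 1)
    (hx0 : x 0 = 1) (hxn : x n = 1)
    (hxh0 : xh 0 = 1) (hxhn : xh n = 1)
    (hxh : ∀ i, 1 ≤ i → i ≤ n - 1 → xh i = if (1 : ℝ) / 2 ≤ x i then 1 else 0)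
    (hc : ∀ i e, 0 ≤ c i e ∧ c i e ≤ 1)
    (hs : ∀ i, 1 ≤ i → i ≤ n →
      s i = max ((x (i - 1) - xh (i - 1)) * c i (i - 1) + (xh i - x i) * c i i) 0) :
    ∑ i ∈ Finset.Icc 1 n, s i ≤ ∑ i ∈ Finset.Icc 1 (n - 1), min (x i) (1 - x i) := by
  have hx' : ∀ j ≤ n, x j ∈ Set.Icc 0 1 ∧ xh j = thresholdRound (x j) := by
    intro j hj
    obtain rfl | rfl | ⟨h1, h2⟩ : j = 0 ∨ j = n ∨ (1 ≤ j ∧ j ≤ n - 1) := by omega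
    · simp [hx0, hxh0]
    · simp [hxn, hxhn]
    · exact ⟨hx j h1 h2, hxh j h1 h2⟩
  have hagent : ∀ i ∈ Icc 1 n, s i ≤ rightExcess (x (i - 1)) + leftExcess (x i) := by
    intro i hi
    obtain ⟨h1, h2⟩ := mem_Icc.mp hi
    obtain ⟨hxi, hxhi⟩ := hx' i h2
    obtain ⟨hxi', hxhi'⟩ := hx' (i - 1) (by omega)
    rw [hs i h1 h2, hxhi, hxhi']
    exact subsidy_le_rightExcess_add_leftExcess hxi' hxi (hc i (i - 1)) (hc i i)
  calc ∑ i ∈ Icc 1 n, s i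
      ≤ ∑ i ∈ Icc 1 n, (rightExcess (x (i - 1)) + leftExcess (x i)) := sum_le_sum hagent
    _ = ∑ i ∈ Icc 1 (n - 1), (rightExcess (x i) + leftExcess (x i)) :=
      sum_Icc_shift_add_of_boundary (rightExcess ∘ x) (leftExcess ∘ x) n (by simp [hx0])
        (by simp [hxn])
    _ = ∑ i ∈ Icc 1 (n - 1), min (x i) (1 - x i) := by
      simp only [add_comm (rightExcess _), leftExcess_add_rightExcess]

/-- Threshold rounding: fractional item `e_i` (shared by agents `i`, `i+1`, agent
`i` holding fraction `x i`) is rounded to whichever of the two holds the larger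
fraction: `x̂ i = 1` if `x i ≥ 1/2` and `x̂ i = 0` otherwise (with the boundary
convention `x 0 = x̂ 0 = x n = x̂ n = 1`). The subsidy of agent `i` is
`s i = max{(x_{i-1} - x̂_{i-1})·c_i(e_{i-1}) + (x̂_i - x_i)·c_i(e_i), 0}`, where
each cost lies in `[0,1]`. Then the total subsidy is at most
`∑_{i=1}^{n-1} min{x_i, 1 - x_i}`. -/
theorem thresholdRounding_subsidy (n : ℕ) (hn : 2 ≤ n) (x xh : ℕ → ℝ)
    (c : ℕ → ℕ → ℝ) (s : ℕ → ℝ)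
    (hx : ∀ i, 1 ≤ i → i ≤ n - 1 → 0 ≤ x i ∧ x i ≤ 1)
    (hx0 : x 0 = 1) (hxn : x n = 1)
    (hxh0 : xh 0 = 1) (hxhn : xh n = 1)
    (hxh : ∀ i, 1 ≤ i → i ≤ n - 1 → xh i = if (1 : ℝ) / 2 ≤ x i then 1 else 0)
    (hc : ∀ i e, 0 ≤ c i e ∧ c i e ≤ 1)
    (hs : ∀ i, 1 ≤ i → i ≤ n →
      s i = max ((x (i - 1) - xh (i - 1)) * c i (i - 1) + (xh i - x i) * c i i) 0) :
    ∑ i ∈ Finset.Icc 1 n, s i ≤ ∑ i ∈ Finset.Icc 1 (n - 1), min (x i) (1 - x i) :=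
  thresholdRounding_subsidy_general n x xh c s hx hx0 hxn hxh0 hxhn hxh hc hs
end

section
/- For any x_1, ..., x_{n−1} ∈ [0,1] and any indices 1 ≤ j_1 < i_2 < j_2 < ... < i_z < j_z ≤ n−1, the sum of the two quantities A = (1 − x_{j_1}) + ∑_{t=2}^{z}(x_{i_t} − x_{j_t}) and B = x_{j_1} + ∑_{t=2}^{z}(1 − x_{i_t} + x_{j_t}) + (n − 2z)/2 equals n/2; hence min{A, B'} ≤ n/4 where B' = ∑_{i=1}^{n−1} min{x_i, 1 − x_i} ≤ B. -/
open Finset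

/-!
The terms `x (I t)` and `x (J t)` cancel between the two subsidies, so
`A + B = 1 + (z - 1) + (n - 2z)/2 = n/2`. The indices `J 1 < I 2 < J 2 < ⋯ < I z < J z` are
`2z - 1` distinct points of `{1, …, n - 1}`; bounding `min (x i) (1 - x i)` by `x i` at the `J t`,
by `1 - x i` at the `I t` and by `1/2` elsewhere gives `B' ≤ B`. Hence
`min A B' ≤ (A + B) / 2 = n/4`.
-/

theorem min_one_sub_le_half (a : ℝ) : min a (1 - a) ≤ 1 / 2 := by
  rw [min_le_iff]
  by_contra! h
  linarith [h.1, h.2]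

theorem sum_min_one_sub_le {ι : Type*} [DecidableEq ι] (f : ι → ℝ) {s P Q : Finset ι}
    (hP : P ⊆ s) (hQ : Q ⊆ s) (hPQ : Disjoint P Q) :
    ∑ i ∈ s, min (f i) (1 - f i) ≤
      ∑ i ∈ P, f i + ∑ i ∈ Q, (1 - f i) + ((#s : ℝ) - #P - #Q) / 2 := by
  have hU : P ∪ Q ⊆ s := union_subset hP hQ
  have hcard : (#(s \ (P ∪ Q)) : ℝ) = #s - #P - #Q := by
    rw [card_sdiff_of_subset hU, Nat.cast_sub (card_le_card hU), card_union_of_disjoint hPQ]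
    push_cast
    ring
  have hrest : ∑ i ∈ s \ (P ∪ Q), min (f i) (1 - f i) ≤ #(s \ (P ∪ Q)) • (1 / 2 : ℝ) :=
    sum_le_card_nsmul _ _ _ fun i _ => min_one_sub_le_half (f i)
  have hP' : ∑ i ∈ P, min (f i) (1 - f i) ≤ ∑ i ∈ P, f i :=
    sum_le_sum fun i _ => min_le_left _ _
  have hQ' : ∑ i ∈ Q, min (f i) (1 - f i) ≤ ∑ i ∈ Q, (1 - f i) :=
    sum_le_sum fun i _ => min_le_right _ _
  rw [nsmul_eq_mul, hcard] at hrest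
  rw [← sum_sdiff hU, sum_union hPQ]
  linarith

/-- `J 1 < I 2 < J 2 < ⋯ < I z < J z`. -/
def Interlaced (z : ℕ) (I J : ℕ → ℕ) : Prop :=
  ∀ t, 2 ≤ t → t ≤ z → J (t - 1) < I t ∧ I t < J t

namespace Interlaced

variable {z : ℕ} {I J : ℕ → ℕ}

theorem strictMonoOn_right (hIJ : Interlaced z I J) :
    StrictMonoOn J (Set.Icc 1 z) := by
  refine strictMonoOn_of_lt_succ Set.ordConnected_Icc fun a _ ha hsa => ?_
  rw [Order.succ_eq_add_one] at hsa ⊢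
  have h := hIJ (a + 1) (by grind) hsa.2
  rw [Nat.add_sub_cancel] at h
  exact h.1.trans h.2

theorem right_lt_left (hIJ : Interlaced z I J)
    {s t : ℕ} (hs : 1 ≤ s) (hst : s < t) (ht : t ≤ z) : J s < I t :=
  (hIJ.strictMonoOn_right.monotoneOn ⟨hs, by omega⟩ ⟨by omega, by omega⟩
    (by omega : s ≤ t - 1)).trans_lt (hIJ t (by omega) ht).1

theorem left_lt_right (hIJ : Interlaced z I J)
    {s t : ℕ} (ht : 2 ≤ t) (hts : t ≤ s) (hs : s ≤ z) : I t < J s :=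
  (hIJ t ht (hts.trans hs)).2.trans_le
    (hIJ.strictMonoOn_right.monotoneOn ⟨by omega, by omega⟩ ⟨by omega, hs⟩ hts)

theorem strictMonoOn_left (hIJ : Interlaced z I J) :
    StrictMonoOn I (Set.Icc 2 z) := fun _ hs _ ht hst =>
  (hIJ.left_lt_right hs.1 le_rfl (hst.le.trans ht.2)).trans
    (hIJ.right_lt_left (one_le_two.trans hs.1) hst ht.2)

theorem disjoint_image (hIJ : Interlaced z I J) :
    Disjoint ((Icc 1 z).image J) ((Icc 2 z).image I) := by
  simp only [disjoint_left, mem_image, mem_Icc, not_exists, not_and]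
  rintro _ ⟨s, hs, rfl⟩ t ht hts
  rcases lt_or_ge s t with hst | hts'
  · exact (hIJ.right_lt_left hs.1 hst ht.2).ne' hts
  · exact (hIJ.left_lt_right ht.1 hts' hs.2).ne hts

theorem image_right_subset (hIJ : Interlaced z I J) :
    (Icc 1 z).image J ⊆ Icc (J 1) (J z) := by
  simp only [subset_iff, mem_image, mem_Icc]
  rintro _ ⟨t, ht, rfl⟩
  have hJ := hIJ.strictMonoOn_right.monotoneOn
  exact ⟨hJ ⟨le_rfl, by omega⟩ ⟨ht.1, ht.2⟩ ht.1, hJ ⟨ht.1, ht.2⟩ ⟨by omega, le_rfl⟩ ht.2⟩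

theorem image_left_subset (hIJ : Interlaced z I J) :
    (Icc 2 z).image I ⊆ Icc (J 1) (J z) := by
  simp only [subset_iff, mem_image, mem_Icc]
  rintro _ ⟨t, ht, rfl⟩
  exact ⟨(hIJ.right_lt_left le_rfl (by omega) ht.2).le,
    (hIJ.left_lt_right ht.1 ht.2 le_rfl).le⟩

theorem sum_min_one_sub_le (hIJ : Interlaced z I J) (x : ℕ → ℝ) {n : ℕ} (hz : 1 ≤ z)
    (hJ1 : 1 ≤ J 1) (hJz : J z ≤ n - 1) :
    ∑ i ∈ Icc 1 (n - 1), min (x i) (1 - x i) ≤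
      x (J 1) + ∑ t ∈ Icc 2 z, (1 - x (I t) + x (J t)) + ((n : ℝ) - 2 * z) / 2 := by
  have hJ : Set.InjOn J (Icc 1 z : Finset ℕ) := by
    rw [coe_Icc]; exact hIJ.strictMonoOn_right.injOn
  have hI : Set.InjOn I (Icc 2 z : Finset ℕ) := by
    rw [coe_Icc]; exact (hIJ.strictMonoOn_left).injOn
  have hn : 1 ≤ n := by
    have := hIJ.strictMonoOn_right.monotoneOn ⟨le_rfl, hz⟩ ⟨hz, le_rfl⟩ hz
    omega
  have hsub : Icc (J 1) (J z) ⊆ Icc 1 (n - 1) := Icc_subset_Icc hJ1 hJz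
  convert _root_.sum_min_one_sub_le x (hIJ.image_right_subset.trans hsub)
    (hIJ.image_left_subset.trans hsub) hIJ.disjoint_image using 1
  rw [sum_image hJ, sum_image hI, card_image_of_injOn hJ, card_image_of_injOn hI,
    ← insert_Icc_add_one_left_eq_Icc hz, sum_insert (by simp), insert_Icc_add_one_left_eq_Icc hz]
  simp only [Nat.card_Icc, sum_add_distrib]
  push_cast [hn, hz]
  ring

end Interlaced

theorem combining_two_roundings_general (n z : ℕ) (hz : 1 ≤ z)
    (x : ℕ → ℝ) (I J : ℕ → ℕ)
    (hJ1 : 1 ≤ J 1)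
    (hIJ : ∀ t, 2 ≤ t → t ≤ z → J (t - 1) < I t ∧ I t < J t)
    (hJz : J z ≤ n - 1) :
    ((1 - x (J 1)) + ∑ t ∈ Finset.Icc 2 z, (x (I t) - x (J t))) +
        (x (J 1) + ∑ t ∈ Finset.Icc 2 z, (1 - x (I t) + x (J t)) +
          ((n : ℝ) - 2 * z) / 2) = (n : ℝ) / 2 ∧
      ∑ i ∈ Finset.Icc 1 (n - 1), min (x i) (1 - x i) ≤
        x (J 1) + ∑ t ∈ Finset.Icc 2 z, (1 - x (I t) + x (J t)) +
          ((n : ℝ) - 2 * z) / 2 ∧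
      min ((1 - x (J 1)) + ∑ t ∈ Finset.Icc 2 z, (x (I t) - x (J t)))
          (∑ i ∈ Finset.Icc 1 (n - 1), min (x i) (1 - x i)) ≤ (n : ℝ) / 4 := by
  have hcancel : ∑ t ∈ Icc 2 z, (x (I t) - x (J t)) + ∑ t ∈ Icc 2 z, (1 - x (I t) + x (J t))
      = z - 1 := by
    rw [← sum_add_distrib, sum_congr rfl fun t _ => show _ = (1 : ℝ) by ring, sum_const,
      Nat.card_Icc, nsmul_one]
    push_cast [hz]
    ring
  have hsum : ((1 - x (J 1)) + ∑ t ∈ Icc 2 z, (x (I t) - x (J t))) +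
      (x (J 1) + ∑ t ∈ Icc 2 z, (1 - x (I t) + x (J t)) + ((n : ℝ) - 2 * z) / 2) = n / 2 := by
    linarith
  have hB := Interlaced.sum_min_one_sub_le hIJ x hz hJ1 hJz
  refine ⟨hsum, hB, ?_⟩
  rw [min_le_iff]
  by_contra! h
  linarith [h.1, h.2]

/-- Combining the two rounding bounds. For `x 1, ..., x (n-1) ∈ [0,1]` and indices
`1 ≤ j_1 < i_2 < j_2 < ... < i_z < j_z ≤ n - 1`, set
`A = (1 - x_{j_1}) + ∑_{t=2}^z (x_{i_t} - x_{j_t})` and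
`B = x_{j_1} + ∑_{t=2}^z (1 - x_{i_t} + x_{j_t}) + (n - 2z)/2`.
Then `A + B = n/2`, `B' = ∑_{i=1}^{n-1} min{x_i, 1 - x_i} ≤ B`, and hence
`min{A, B'} ≤ n/4`. -/
theorem combining_two_roundings (n z : ℕ) (hn : 2 ≤ n) (hz : 1 ≤ z)
    (x : ℕ → ℝ) (I J : ℕ → ℕ)
    (hx : ∀ i, 1 ≤ i → i ≤ n - 1 → 0 ≤ x i ∧ x i ≤ 1)
    (hJ1 : 1 ≤ J 1)
    (hIJ : ∀ t, 2 ≤ t → t ≤ z → J (t - 1) < I t ∧ I t < J t)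
    (hJz : J z ≤ n - 1) :
    ((1 - x (J 1)) + ∑ t ∈ Finset.Icc 2 z, (x (I t) - x (J t))) +
        (x (J 1) + ∑ t ∈ Finset.Icc 2 z, (1 - x (I t) + x (J t)) +
          ((n : ℝ) - 2 * z) / 2) = (n : ℝ) / 2 ∧
      ∑ i ∈ Finset.Icc 1 (n - 1), min (x i) (1 - x i) ≤
        x (J 1) + ∑ t ∈ Finset.Icc 2 z, (1 - x (I t) + x (J t)) +
          ((n : ℝ) - 2 * z) / 2 ∧
      min ((1 - x (J 1)) + ∑ t ∈ Finset.Icc 2 z, (x (I t) - x (J t)))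
          (∑ i ∈ Finset.Icc 1 (n - 1), min (x i) (1 - x i)) ≤ (n : ℝ) / 4 :=
  combining_two_roundings_general n z hz x I J hJ1 hIJ hJz
end

section
/- The Weighted Load Balancing Algorithm, which allocates items in non-increasing cost order, each time to the agent maximizing the slack w_i·c(M) − c(X_i), outputs a WPROPX allocation: for every agent i and every item e ∈ X_i, c(X_i − e) ≤ w_i·c(M). -/
/-!
Let `j` be the last item agent `i` receives. Removing it leaves exactly `i`'s bundle at the
moment `j` was assigned, so it suffices that `i` had nonnegative slack then. The slacks of all
agents sum to `c(M)` minus the cost of the items already assigned, which is nonnegative; since `i`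
had the largest slack, its slack was nonnegative. Finally `c(e) ≥ c(j)` for every `e ∈ X_i`,
because items arrive in non-increasing cost order.
-/

open Finset

theorem nonneg_of_forall_le_of_sum_nonneg {ι M : Type*} [Fintype ι] [Nonempty ι]
    [AddCommMonoid M] [LinearOrder M] [IsOrderedCancelAddMonoid M]
    {s : ι → M} {i : ι} (hsum : 0 ≤ ∑ k, s k) (hmax : ∀ k, s k ≤ s i) : 0 ≤ s i := by
  obtain ⟨k, -, hk⟩ := exists_le_of_sum_le univ_nonempty (f := 0) (g := s) (by simpa using hsum)
  exact hk.trans (hmax k)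

theorem sum_weighted_slack_nonneg {α ι : Type*} [Fintype ι] [DecidableEq ι]
    (s : Finset α) (f : α → ι) (c : α → ℝ) (w : ι → ℝ) (hw : ∑ i, w i = 1)
    {C : ℝ} (hC : ∑ e ∈ s, c e ≤ C) :
    0 ≤ ∑ i, (w i * C - ∑ e ∈ s with f e = i, c e) := by
  rw [sum_sub_distrib, ← sum_mul, hw, one_mul, sum_fiberwise]
  linarith

theorem weightedLoadBalancing_WPROPX_general (n m : ℕ)
    (c : Fin m → ℝ) (w : Fin n → ℝ)
    (hc0 : ∀ e, 0 ≤ c e)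
    (hsort : ∀ j k : Fin m, j ≤ k → c k ≤ c j)
    (hwsum : ∑ i, w i = 1)
    (a : Fin m → Fin n)
    (halg : ∀ (j : Fin m) (i : Fin n),
      w i * (∑ e, c e) - ∑ e ∈ Finset.univ.filter (fun e => e < j ∧ a e = i), c e ≤
        w (a j) * (∑ e, c e) -
          ∑ e ∈ Finset.univ.filter (fun e => e < j ∧ a e = a j), c e) :
    ∀ (i : Fin n) (e : Fin m), a e = i →
      (∑ e' ∈ Finset.univ.filter (fun e' => a e' = i), c e') - c e ≤
        w i * ∑ e', c e' := by
  intro i e hae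
  have : Nonempty (Fin n) := ⟨i⟩
  set S := univ.filter (fun e' => a e' = i)
  have heS : e ∈ S := by simp [S, hae]
  set j := S.max' ⟨e, heS⟩
  have hjS : j ∈ S := S.max'_mem _
  have haj : a j = i := (mem_filter.1 hjS).2
  have hbefore : ∀ k, univ.filter (fun e' => e' < j ∧ a e' = k) =
      (univ.filter (· < j)).filter (fun e' => a e' = k) := fun _ => (filter_filter _ _ _).symm
  have hbundle :
      ∑ e' ∈ S, c e' - c j = ∑ e' ∈ univ.filter (fun e' => e' < j ∧ a e' = i), c e' := by
    have herase : S.erase j = S.filter (· < j) := S.erase_max'_eq_filter_lt _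
    rw [← sum_erase_eq_sub hjS, herase, filter_filter]
    simp only [and_comm]
  have hslack :
      0 ≤ w i * ∑ e', c e' - ∑ e' ∈ univ.filter (fun e' => e' < j ∧ a e' = i), c e' := by
    simpa only [hbefore] using nonneg_of_forall_le_of_sum_nonneg
      (sum_weighted_slack_nonneg _ a c w hwsum (sum_le_univ_sum_of_nonneg hc0))
      (fun k => by simpa only [hbefore, haj] using halg j k)
  have hcost : c j ≤ c e := hsort e j (S.le_max' e heS)
  linarith

/-- The Weighted Load Balancing Algorithm outputs a WPROPX allocation. Agents
share an identical additive cost `c` (items sorted non-increasingly) and have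
nonnegative weights summing to 1. The run is described by the assignment
`a : Fin m → Fin n`: when item `j` is allocated, its receiver `a j` maximizes the
slack `w i · c(M) - c(X_i)` over current partial bundles. Conclusion: for every
agent `i` and every item `e ∈ X_i`, `c(X_i - e) ≤ w i · c(M)`. -/
theorem weightedLoadBalancing_WPROPX (n m : ℕ) (hn : 0 < n)
    (c : Fin m → ℝ) (w : Fin n → ℝ)
    (hc0 : ∀ e, 0 ≤ c e)
    (hsort : ∀ j k : Fin m, j ≤ k → c k ≤ c j)
    (hw : ∀ i, 0 ≤ w i) (hwsum : ∑ i, w i = 1)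
    (a : Fin m → Fin n)
    (halg : ∀ (j : Fin m) (i : Fin n),
      w i * (∑ e, c e) - ∑ e ∈ Finset.univ.filter (fun e => e < j ∧ a e = i), c e ≤
        w (a j) * (∑ e, c e) -
          ∑ e ∈ Finset.univ.filter (fun e => e < j ∧ a e = a j), c e) :
    ∀ (i : Fin n) (e : Fin m), a e = i →
      (∑ e' ∈ Finset.univ.filter (fun e' => a e' = i), c e') - c e ≤
        w i * ∑ e', c e' :=
  weightedLoadBalancing_WPROPX_general n m c w hc0 hsort hwsum a halg
end

section
/- There is an instance with two agents and weights w_1 = 0.43, w_2 = 0.57 for which no cut point l ∈ [0, 7] of the item interval produces a weighted proportional division into a prefix and suffix: assigning the prefix (0, l] to agent 1 forces l ≤ 1.3 and leaves agent 2 with cost more than 5.7, while assigning it to agent 2 forces l ≤ 1.9 and leaves agent 1 with cost more than 4.3. -/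
/-!
Both prefix costs are piecewise linear and nondecreasing in the cut point, and on `[1, 2]` they
are `c₀ + c₁ (l - 1)`. Agent 1 can accept the prefix only up to `l = 1.3`, where agent 2's prefix
cost is only `3.9`, leaving her `6.1 > 5.7`; agent 2 can accept it only up to `l = 1.9`, where
agent 1's prefix cost is only `4.9`, leaving him `5.1 > 4.3`.
-/

open Finset

/-- Cost of the prefix interval `(0, l]` when the seven items (item `j`
occupying `(j, j+1]`) have costs `c`, extended linearly to fractions. -/
noncomputable def prefixCost (c : Fin 7 → ℝ) (l : ℝ) : ℝ :=
  ∑ j : Fin 7, c j * max (min (l - (j : ℕ)) 1) 0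

section Clamp

variable {t : ℝ}

lemma max_min_one_zero_of_nonpos (h : t ≤ 0) : max (min t 1) 0 = 0 :=
  max_eq_right ((min_le_left _ _).trans h)

lemma max_min_one_zero_of_one_le (h : 1 ≤ t) : max (min t 1) 0 = 1 := by
  rw [min_eq_right h, max_eq_left zero_le_one]

lemma max_min_one_zero_of_mem_Icc (h : t ∈ Set.Icc 0 1) : max (min t 1) 0 = t := by
  rw [min_eq_left h.2, max_eq_left h.1]

lemma monotone_max_min_one_zero : Monotone fun t : ℝ => max (min t 1) 0 :=
  fun _ _ h => max_le_max_right 0 (min_le_min_right 1 h)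

end Clamp

namespace prefixCost

variable {c : Fin 7 → ℝ} {l a : ℝ}

lemma monotone (hc : 0 ≤ c) : Monotone (prefixCost c) := fun _ _ h =>
  sum_le_sum fun j _ => mul_le_mul_of_nonneg_left
    (monotone_max_min_one_zero (sub_le_sub_right h _)) (hc j)

lemma eq_sum_seven (c : Fin 7 → ℝ) (l : ℝ) : prefixCost c l =
    c 0 * max (min l 1) 0 + c 1 * max (min (l - 1) 1) 0 + c 2 * max (min (l - 2) 1) 0 +
    c 3 * max (min (l - 3) 1) 0 + c 4 * max (min (l - 4) 1) 0 +
    c 5 * max (min (l - 5) 1) 0 + c 6 * max (min (l - 6) 1) 0 := by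
  simp [prefixCost, Fin.sum_univ_seven]

lemma seven_eq_sum (c : Fin 7 → ℝ) : prefixCost c 7 = ∑ j, c j := by
  rw [eq_sum_seven, Fin.sum_univ_seven]
  norm_num [max_min_one_zero_of_one_le]

lemma of_mem_Icc_one_two (hl : l ∈ Set.Icc 1 2) : prefixCost c l = c 0 + c 1 * (l - 1) := by
  obtain ⟨h1, h2⟩ := hl
  rw [eq_sum_seven, max_min_one_zero_of_one_le h1,
    max_min_one_zero_of_mem_Icc ⟨by linarith, by linarith⟩]
  simp only [max_min_one_zero_of_nonpos (by linarith : l - 2 ≤ 0),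
    max_min_one_zero_of_nonpos (by linarith : l - 3 ≤ 0),
    max_min_one_zero_of_nonpos (by linarith : l - 4 ≤ 0),
    max_min_one_zero_of_nonpos (by linarith : l - 5 ≤ 0),
    max_min_one_zero_of_nonpos (by linarith : l - 6 ≤ 0)]
  ring

lemma le_of_le_of_mem_Ico (hc : 0 ≤ c) (hc₁ : 0 < c 1) (ha : a ∈ Set.Ico 1 2)
    (h : prefixCost c l ≤ prefixCost c a) : l ≤ a := by
  by_contra! hal
  have hm : min l 2 ∈ Set.Icc 1 2 := ⟨le_min (by linarith [ha.1]) one_le_two, min_le_right _ _⟩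
  have ham : a < min l 2 := lt_min hal ha.2
  have : prefixCost c a < prefixCost c (min l 2) := by
    rw [of_mem_Icc_one_two (Set.Ico_subset_Icc_self ha), of_mem_Icc_one_two hm]
    gcongr
  linarith [monotone hc (min_le_left l 2)]

end prefixCost

/-- The two-agent weighted instance (weights `0.43`, `0.57`, costs
`(4,1,1,1,1,1,1)` and `(3,3,1,1,1,1,0)`, both totalling 10, so the weighted
proportional shares are `4.3` and `5.7`) for which no cut point `l ∈ [0,7]`
produces a weighted proportional prefix/suffix division: giving the prefix
`(0, l]` to agent 1 forces `l ≤ 1.3` and leaves agent 2 with cost more than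
`5.7`, while giving it to agent 2 forces `l ≤ 1.9` and leaves agent 1 with cost
more than `4.3`. -/
theorem no_wprop_cut : ∀ l : ℝ, 0 ≤ l → l ≤ 7 →
    (prefixCost ![4, 1, 1, 1, 1, 1, 1] l ≤ 43 / 10 →
      l ≤ 13 / 10 ∧
        57 / 10 <
          prefixCost ![3, 3, 1, 1, 1, 1, 0] 7 - prefixCost ![3, 3, 1, 1, 1, 1, 0] l) ∧
    (prefixCost ![3, 3, 1, 1, 1, 1, 0] l ≤ 57 / 10 →
      l ≤ 19 / 10 ∧
        43 / 10 <
          prefixCost ![4, 1, 1, 1, 1, 1, 1] 7 - prefixCost ![4, 1, 1, 1, 1, 1, 1] l) := by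
  intro l _ _
  set c₁ : Fin 7 → ℝ := ![4, 1, 1, 1, 1, 1, 1]
  set c₂ : Fin 7 → ℝ := ![3, 3, 1, 1, 1, 1, 0]
  have hc₁ : 0 ≤ c₁ := by intro j; fin_cases j <;> simp [c₁]
  have hc₂ : 0 ≤ c₂ := by intro j; fin_cases j <;> simp [c₂]
  have h₁₇ : prefixCost c₁ 7 = 10 := by
    rw [prefixCost.seven_eq_sum]; simp [c₁, Fin.sum_univ_succ]; norm_num
  have h₂₇ : prefixCost c₂ 7 = 10 := by
    rw [prefixCost.seven_eq_sum]; simp [c₂, Fin.sum_univ_succ]; norm_num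
  have h₁₃ : prefixCost c₁ (13 / 10) = 43 / 10 := by
    norm_num [prefixCost.of_mem_Icc_one_two (show (13 / 10 : ℝ) ∈ Set.Icc 1 2 by norm_num), c₁]
  have h₂₃ : prefixCost c₂ (13 / 10) = 39 / 10 := by
    norm_num [prefixCost.of_mem_Icc_one_two (show (13 / 10 : ℝ) ∈ Set.Icc 1 2 by norm_num), c₂]
  have h₁₉ : prefixCost c₁ (19 / 10) = 49 / 10 := by
    norm_num [prefixCost.of_mem_Icc_one_two (show (19 / 10 : ℝ) ∈ Set.Icc 1 2 by norm_num), c₁]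
  have h₂₉ : prefixCost c₂ (19 / 10) = 57 / 10 := by
    norm_num [prefixCost.of_mem_Icc_one_two (show (19 / 10 : ℝ) ∈ Set.Icc 1 2 by norm_num), c₂]
  refine ⟨fun h => ?_, fun h => ?_⟩
  · have hl := prefixCost.le_of_le_of_mem_Ico hc₁ (by simp [c₁])
      ⟨by norm_num, by norm_num⟩ (h.trans h₁₃.ge)
    exact ⟨hl, by linarith [prefixCost.monotone hc₂ hl]⟩
  · have hl := prefixCost.le_of_le_of_mem_Ico hc₂ (by simp [c₂])
      ⟨by norm_num, by norm_num⟩ (h.trans h₂₉.ge)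
    exact ⟨hl, by linarith [prefixCost.monotone hc₁ hl]⟩
end

section
/- For goods with n agents sharing identical valuations: allocating n/2 unit-value items (n even) requires total subsidy at least n/4 for any proportional-with-subsidy allocation, where the subsidy of agent i is max{1/2 − v(X_i), 0}. -/
/-! Only `n / 2` agents can receive a good, so at least `n - n / 2 ≥ n / 2` agents receive
nothing, and each of them needs the full subsidy `1 / 2`. -/

open Finset

theorem card_sub_card_le_card_compl_image {α β : Type*} [Fintype α] [Fintype β] [DecidableEq β]
    (f : α → β) : Fintype.card β - Fintype.card α ≤ #(univ.image f)ᶜ := by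
  have h : #(univ.image f) ≤ Fintype.card α := card_image_le
  rw [card_compl]
  omega

theorem mul_card_compl_image_le_sum_max {α β : Type*} [Fintype α] [Fintype β] [DecidableEq β]
    (f : α → β) (c : ℝ) :
    c * #(univ.image f)ᶜ ≤ ∑ i, max (c - (#{e | f e = i} : ℝ)) 0 := by
  have hfiber : ∀ i ∈ (univ.image f)ᶜ, #{e | f e = i} = 0 := fun i hi => by
    simp_all
  calc c * #(univ.image f)ᶜ = ∑ i ∈ (univ.image f)ᶜ, c := by rw [sum_const, nsmul_eq_mul, mul_comm]
    _ ≤ ∑ i ∈ (univ.image f)ᶜ, max (c - (#{e | f e = i} : ℝ)) 0 :=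
      sum_le_sum fun i hi => by simp [hfiber i hi]
    _ ≤ ∑ i, max (c - (#{e | f e = i} : ℝ)) 0 :=
      sum_le_sum_of_subset_of_nonneg (subset_univ _) fun _ _ _ => le_max_right _ _

theorem prop_goods_lower_bound_even_general (n : ℕ)
    (X : Fin (n / 2) → Fin n) :
    (n : ℝ) / 4 ≤
      ∑ i : Fin n,
        max ((1 : ℝ) / 2 - ((Finset.univ.filter fun e => X e = i).card : ℝ)) 0 := by
  have hunserved : n - n / 2 ≤ #(univ.image X)ᶜ := by
    simpa using card_sub_card_le_card_compl_image X
  have hhalf : (n : ℝ) ≤ 2 * (n - n / 2 : ℕ) := by exact_mod_cast (by omega : n ≤ 2 * (n - n / 2))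
  calc (n : ℝ) / 4 ≤ 1 / 2 * (n - n / 2 : ℕ) := by linarith
    _ ≤ 1 / 2 * #(univ.image X)ᶜ := by gcongr
    _ ≤ _ := mul_card_compl_image_le_sum_max X _

/-- Goods lower bound: allocating `n/2` identical unit-value goods among `n`
agents (`n` even) with identical valuations, any proportional-with-subsidy
allocation needs total subsidy at least `n/4`, where agent `i`'s subsidy is
`max (1/2 - v(X_i)) 0` (the proportional share being `1/2`). -/
theorem prop_goods_lower_bound_even (n : ℕ) (hn : 2 ≤ n) (heven : Even n)
    (X : Fin (n / 2) → Fin n) :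
    (n : ℝ) / 4 ≤
      ∑ i : Fin n,
        max ((1 : ℝ) / 2 - ((Finset.univ.filter fun e => X e = i).card : ℝ)) 0 :=
  prop_goods_lower_bound_even_general n X
end
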